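/- arXiv:1608.05358 — 3 statements merged into one kernel-verified Lean document; each statement's English description precedes it below -/
import Mathlib

section
/- If h is a part-preserving homomorphism from pattern P1 to pattern P2, and P3 is the subdivision of P2 at parts U and V, then there is a part-preserving homomorphism from the subdivision of P1 at the parts h^{-1}(U) and h^{-1}(V) to P3. Consequently, the topological-minor occurrence relation is transitive: if P →TM P' and P' →TM P'', then P →TM P''. -/
/-- A pattern: a set of points with an equivalence relation `sim` (whose classes
are the parts), and symmetric relations `pos` (positive edges) and `neg`
(negative edges), each disjoint from `sim`. -/
structure Pattern where
  X : Type
  sim : X → X → Prop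
  pos : X → X → Prop
  neg : X → X → Prop
  sim_equiv : Equivalence sim
  pos_symm : ∀ ⦃x y⦄, pos x y → pos y x
  neg_symm : ∀ ⦃x y⦄, neg x y → neg y x
  sim_pos : ∀ ⦃x y⦄, sim x y → ¬ pos x y
  sim_neg : ∀ ⦃x y⦄, sim x y → ¬ neg x y

/-- A homomorphism of patterns. -/
def IsHom (P Q : Pattern) (h : P.X → Q.X) : Prop :=
  (∀ x y, P.sim x y → Q.sim (h x) (h y)) ∧
  (∀ x y, P.pos x y → Q.pos (h x) (h y)) ∧
  (∀ x y, P.neg x y → Q.neg (h x) (h y))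

/-- A part-preserving map: non-equivalent points map to non-equivalent points. -/
def PreservesParts (P Q : Pattern) (h : P.X → Q.X) : Prop :=
  ∀ x y, ¬ P.sim x y → ¬ Q.sim (h x) (h y)

/-- `P` occurs as a sub-pattern in `Q`. -/
def SP (P Q : Pattern) : Prop :=
  ∃ h : P.X → Q.X, IsHom P Q h ∧ PreservesParts P Q h

/-- New points subdividing the positive edges between the parts of `u` and `v`. -/
def PosZ (P : Pattern) (u v : P.X) : Type :=
  {p : P.X × P.X // P.sim p.1 u ∧ P.sim p.2 v ∧ P.pos p.1 p.2}

/-- New points subdividing the negative edges between the parts of `u` and `v`: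
`false` is the point attached to the `u`-side, `true` to the `v`-side. -/
def NegZ (P : Pattern) (u v : P.X) : Type :=
  {p : P.X × P.X // P.sim p.1 u ∧ P.sim p.2 v ∧ P.neg p.1 p.2} × Bool

/-- The subdivision of the pattern `P` at the (distinct) parts of `u` and `v`. -/
def SubdivOne (P : Pattern) (u v : P.X) : Pattern where
  X := P.X ⊕ (PosZ P u v ⊕ NegZ P u v)
  sim := fun a b => match a, b with
    | .inl x, .inl y => P.sim x y
    | .inr _, .inr _ => True
    | _, _ => False
  pos := fun a b => match a, b with
    | .inl x, .inl y => P.pos x y ∧ ¬((P.sim x u ∧ P.sim y v) ∨ (P.sim x v ∧ P.sim y u))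
    | .inl x, .inr (.inl z) => x = z.1.1 ∨ x = z.1.2
    | .inr (.inl z), .inl x => x = z.1.1 ∨ x = z.1.2
    | _, _ => False
  neg := fun a b => match a, b with
    | .inl x, .inl y => P.neg x y ∧ ¬((P.sim x u ∧ P.sim y v) ∨ (P.sim x v ∧ P.sim y u))
    | .inl x, .inr (.inr z) => (z.2 = false ∧ x = z.1.1.1) ∨ (z.2 = true ∧ x = z.1.1.2)
    | .inr (.inr z), .inl x => (z.2 = false ∧ x = z.1.1.1) ∨ (z.2 = true ∧ x = z.1.1.2)
    | _, _ => False
  sim_equiv := by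
    refine ⟨?_, ?_, ?_⟩
    · rintro (x | z)
      · exact P.sim_equiv.refl x
      · trivial
    · rintro (x | z) (y | w) h
      · exact P.sim_equiv.symm h
      · exact h.elim
      · exact h.elim
      · trivial
    · rintro (x | z) (y | w) (t | s) h1 h2
      · exact P.sim_equiv.trans h1 h2
      · exact h2.elim
      · exact h1.elim
      · exact h1.elim
      · exact h1.elim
      · exact h1.elim
      · exact h2.elim
      · trivial
  pos_symm := by
    rintro (x | (z | z)) (y | (w | w)) h <;>
      first
        | exact h.elim
        | skip
    · exact ⟨P.pos_symm h.1, fun hc => h.2 (hc.elim (fun c => Or.inr ⟨c.2, c.1⟩) (fun c => Or.inl ⟨c.2, c.1⟩))⟩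
    · exact h
    · exact h
  neg_symm := by
    rintro (x | (z | z)) (y | (w | w)) h <;>
      first
        | exact h.elim
        | skip
    · exact ⟨P.neg_symm h.1, fun hc => h.2 (hc.elim (fun c => Or.inr ⟨c.2, c.1⟩) (fun c => Or.inl ⟨c.2, c.1⟩))⟩
    · exact h
    · exact h
  sim_pos := by
    rintro (x | (z | z)) (y | (w | w)) h hp <;>
      first
        | exact h
        | exact hp
        | exact P.sim_pos h hp.1
  sim_neg := by
    rintro (x | (z | z)) (y | (w | w)) h hp <;>
      first
        | exact h
        | exact hp
        | exact P.sim_neg h hp.1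

/-- One subdivision step between patterns. -/
def SubdivStep (P Q : Pattern) : Prop :=
  ∃ u v : P.X, ¬ P.sim u v ∧ Q = SubdivOne P u v

/-- `Q` is obtained from `P` by a (possibly empty) sequence of subdivisions. -/
def IsSubdivision : Pattern → Pattern → Prop :=
  Relation.ReflTransGen SubdivStep

/-- `P` occurs as a topological minor in `Q`. -/
def TM (P Q : Pattern) : Prop :=
  ∃ P' : Pattern, IsSubdivision P P' ∧ SP P' Q

/-- A binary CSP instance: finitely many variables, finite domains, and a
symmetric family of binary constraints. -/
structure CSPInstance where
  V : Type
  finV : Finite V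
  D : V → Type
  finD : ∀ v, Finite (D v)
  R : ∀ u v : V, D u → D v → Prop
  symmR : ∀ u v a b, R u v a b → R v u b a

/-- The pattern associated with a binary CSP instance. -/
def Pat (I : CSPInstance) : Pattern where
  X := Σ v : I.V, I.D v
  sim := fun x y => x.1 = y.1
  pos := fun x y => x.1 ≠ y.1 ∧ I.R x.1 y.1 x.2 y.2
  neg := fun x y => x.1 ≠ y.1 ∧ ¬ I.R x.1 y.1 x.2 y.2
  sim_equiv := ⟨fun _ => rfl, Eq.symm, Eq.trans⟩
  pos_symm := fun _ _ h => ⟨Ne.symm h.1, I.symmR _ _ _ _ h.2⟩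
  neg_symm := fun _ _ h => ⟨Ne.symm h.1, fun hr => h.2 (I.symmR _ _ _ _ hr)⟩
  sim_pos := fun _ _ h hp => hp.1 h
  sim_neg := fun _ _ h hn => hn.1 h

/-- The class of instances avoiding `P` as a sub-pattern. -/
def ForbSP (P : Pattern) : Set CSPInstance := {I | ¬ SP P (Pat I)}

/-- The class of instances avoiding `P` as a topological minor. -/
def ForbTM (P : Pattern) : Set CSPInstance := {I | ¬ TM P (Pat I)}

/-! A part-preserving homomorphism `h` reflects parts, so the edges of `P1` between `h⁻¹(U)` and
`h⁻¹(V)` are exactly the edges sent to edges between `U` and `V`; sending each subdividing point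
`z_{xy}` to `z_{h x, h y}` extends `h` to the subdivisions. For transitivity, an occurrence
`Q →SP P'` therefore survives each subdivision step of `P'` after subdividing `Q` at most once
(not at all when `U` or `V` misses the image of `h`), and induction along the subdivision
sequence composes the two topological-minor occurrences. -/

theorem IsHom.comp {P Q R : Pattern} {f : P.X → Q.X} {g : Q.X → R.X}
    (hg : IsHom Q R g) (hf : IsHom P Q f) : IsHom P R (g ∘ f) :=
  ⟨fun _ _ h => hg.1 _ _ (hf.1 _ _ h), fun _ _ h => hg.2.1 _ _ (hf.2.1 _ _ h),
    fun _ _ h => hg.2.2 _ _ (hf.2.2 _ _ h)⟩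

theorem PreservesParts.comp {P Q R : Pattern} {f : P.X → Q.X} {g : Q.X → R.X}
    (hg : PreservesParts Q R g) (hf : PreservesParts P Q f) : PreservesParts P R (g ∘ f) :=
  fun _ _ h => hg _ _ (hf _ _ h)

theorem SP.trans {P Q R : Pattern} : SP P Q → SP Q R → SP P R
  | ⟨f, hf, hf'⟩, ⟨g, hg, hg'⟩ => ⟨g ∘ f, hg.comp hf, hg'.comp hf'⟩

theorem PreservesParts.sim_of_map_sim {P Q : Pattern} {h : P.X → Q.X}
    (hpp : PreservesParts P Q h) {x y : P.X} (hxy : Q.sim (h x) (h y)) : P.sim x y :=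
  Classical.byContradiction fun hn => hpp x y hn hxy

section Lift

variable {P1 P2 : Pattern} {h : P1.X → P2.X} {u1 v1 : P1.X} {u v : P2.X}

theorem IsHom.map_sim_of_sim (hh : IsHom P1 P2 h) {x : P1.X} (hx : P1.sim x u1)
    (hu : P2.sim (h u1) u) : P2.sim (h x) u :=
  P2.sim_equiv.trans (hh.1 _ _ hx) hu

theorem PreservesParts.crossing_of_map_crossing (hpp : PreservesParts P1 P2 h)
    (hu : P2.sim (h u1) u) (hv : P2.sim (h v1) v) (x y : P1.X) :
    (P2.sim (h x) u ∧ P2.sim (h y) v) ∨ (P2.sim (h x) v ∧ P2.sim (h y) u) →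
      (P1.sim x u1 ∧ P1.sim y v1) ∨ (P1.sim x v1 ∧ P1.sim y u1) := by
  have reflect_u : ∀ {x : P1.X}, P2.sim (h x) u → P1.sim x u1 :=
    fun hx => hpp.sim_of_map_sim (P2.sim_equiv.trans hx (P2.sim_equiv.symm hu))
  have reflect_v : ∀ {x : P1.X}, P2.sim (h x) v → P1.sim x v1 :=
    fun hx => hpp.sim_of_map_sim (P2.sim_equiv.trans hx (P2.sim_equiv.symm hv))
  exact Or.imp (And.imp reflect_u reflect_v) (And.imp reflect_v reflect_u)

def subdivMap (hh : IsHom P1 P2 h) (hu : P2.sim (h u1) u) (hv : P2.sim (h v1) v) :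
    (SubdivOne P1 u1 v1).X → (SubdivOne P2 u v).X :=
  Sum.map h <| Sum.map
    (fun z => ⟨(h z.1.1, h z.1.2), hh.map_sim_of_sim z.2.1 hu, hh.map_sim_of_sim z.2.2.1 hv,
      hh.2.1 _ _ z.2.2.2⟩)
    (Prod.map
      (fun z => ⟨(h z.1.1, h z.1.2), hh.map_sim_of_sim z.2.1 hu, hh.map_sim_of_sim z.2.2.1 hv,
        hh.2.2 _ _ z.2.2.2⟩) id)

theorem isHom_subdivMap (hh : IsHom P1 P2 h) (hpp : PreservesParts P1 P2 h)
    (hu : P2.sim (h u1) u) (hv : P2.sim (h v1) v) :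
    IsHom (SubdivOne P1 u1 v1) (SubdivOne P2 u v) (subdivMap hh hu hv) := by
  have crossing := hpp.crossing_of_map_crossing hu hv
  refine ⟨?_, ?_, ?_⟩
  · rintro (x | z) (y | w) hs
    exacts [hh.1 x y hs, hs.elim, hs.elim, trivial]
  · rintro (x | z | z) (y | w | w) hp <;> try exact hp.elim
    · exact ⟨hh.2.1 x y hp.1, mt (crossing x y) hp.2⟩
    · exact hp.imp (congrArg h) (congrArg h)
    · exact hp.imp (congrArg h) (congrArg h)
  · rintro (x | z | z) (y | w | w) hn <;> try exact hn.elim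
    · exact ⟨hh.2.2 x y hn.1, mt (crossing x y) hn.2⟩
    · exact hn.imp (And.imp_right (congrArg h)) (And.imp_right (congrArg h))
    · exact hn.imp (And.imp_right (congrArg h)) (And.imp_right (congrArg h))

theorem preservesParts_subdivMap (hh : IsHom P1 P2 h) (hpp : PreservesParts P1 P2 h)
    (hu : P2.sim (h u1) u) (hv : P2.sim (h v1) v) :
    PreservesParts (SubdivOne P1 u1 v1) (SubdivOne P2 u v) (subdivMap hh hu hv) := by
  rintro (x | z) (y | w) hns
  exacts [hpp x y hns, id, id, absurd trivial hns]

theorem SP.subdivOne_of_map_sim (hh : IsHom P1 P2 h) (hpp : PreservesParts P1 P2 h)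
    (huv : ¬ P1.sim u1 v1) (hu : P2.sim (h u1) u) (hv : P2.sim (h v1) v) :
    ∃ Q, SubdivStep P1 Q ∧ SP Q (SubdivOne P2 u v) :=
  ⟨_, ⟨u1, v1, huv, rfl⟩, _, isHom_subdivMap hh hpp hu hv, preservesParts_subdivMap hh hpp hu hv⟩

/-- No edge of `P1` is sent to an edge being subdivided, so `h` itself is an occurrence. -/
theorem SP.subdivOne_of_forall_not_map_sim (hh : IsHom P1 P2 h) (hpp : PreservesParts P1 P2 h)
    (hmiss : ∀ x y, P2.sim (h x) u → ¬ P2.sim (h y) v) : SP P1 (SubdivOne P2 u v) := by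
  have not_crossing : ∀ x y,
      ¬ ((P2.sim (h x) u ∧ P2.sim (h y) v) ∨ (P2.sim (h x) v ∧ P2.sim (h y) u)) := by
    rintro x y (⟨hx, hy⟩ | ⟨hx, hy⟩)
    exacts [hmiss x y hx hy, hmiss y x hy hx]
  exact ⟨Sum.inl ∘ h,
    ⟨hh.1, fun x y hp => ⟨hh.2.1 x y hp, not_crossing x y⟩,
      fun x y hn => ⟨hh.2.2 x y hn, not_crossing x y⟩⟩, hpp⟩

end Lift

theorem SP.exists_isSubdivision_of_subdivStep {Q P R : Pattern} (hQP : SP Q P)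
    (hPR : SubdivStep P R) : ∃ Q', IsSubdivision Q Q' ∧ SP Q' R := by
  obtain ⟨h, hh, hpp⟩ := hQP
  obtain ⟨u, v, huv, rfl⟩ := hPR
  by_cases hmeet : ∃ u1 v1, P.sim (h u1) u ∧ P.sim (h v1) v
  · obtain ⟨u1, v1, hu, hv⟩ := hmeet
    have hne : ¬ Q.sim u1 v1 := fun hs =>
      huv (P.sim_equiv.trans (P.sim_equiv.symm hu) (P.sim_equiv.trans (hh.1 _ _ hs) hv))
    obtain ⟨Q', hstep, hQ'⟩ := SP.subdivOne_of_map_sim hh hpp hne hu hv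
    exact ⟨Q', .single hstep, hQ'⟩
  · push Not at hmeet
    exact ⟨Q, .refl, SP.subdivOne_of_forall_not_map_sim hh hpp hmeet⟩

theorem SP.exists_isSubdivision {Q P R : Pattern} (hQP : SP Q P) (hPR : IsSubdivision P R) :
    ∃ Q', IsSubdivision Q Q' ∧ SP Q' R := by
  induction hPR with
  | refl => exact ⟨Q, .refl, hQP⟩
  | tail _ hstep ih =>
    obtain ⟨Q', hQQ', hQ'⟩ := ih
    obtain ⟨Q'', hQ'Q'', hQ''⟩ := hQ'.exists_isSubdivision_of_subdivStep hstep
    exact ⟨Q'', hQQ'.trans hQ'Q'', hQ''⟩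

theorem TM.trans {P P' P'' : Pattern} : TM P P' → TM P' P'' → TM P P''
  | ⟨_, hPQ, hQ⟩, ⟨_, hP'R, hR⟩ =>
    let ⟨Q', hQQ', hQ'⟩ := hQ.exists_isSubdivision hP'R
    ⟨Q', hPQ.trans hQQ', hQ'.trans hR⟩

/-- A part-preserving homomorphism lifts to subdivisions, and
consequently topological-minor occurrence is transitive. -/
theorem subdivision_lift_and_TM_trans :
    (∀ (P1 P2 : Pattern) (h : P1.X → P2.X), IsHom P1 P2 h → PreservesParts P1 P2 h →
      ∀ (u v : P2.X), ¬ P2.sim u v →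
        ∀ (u1 v1 : P1.X), h u1 = u → h v1 = v →
          ∃ g : (SubdivOne P1 u1 v1).X → (SubdivOne P2 u v).X,
            IsHom (SubdivOne P1 u1 v1) (SubdivOne P2 u v) g ∧
            PreservesParts (SubdivOne P1 u1 v1) (SubdivOne P2 u v) g) ∧
    (∀ P P' P'' : Pattern, TM P P' → TM P' P'' → TM P P'') := by
  refine ⟨?_, fun _ _ _ => TM.trans⟩
  rintro P1 P2 h hh hpp _ _ - u1 v1 rfl rfl
  have hu := P2.sim_equiv.refl (h u1)
  have hv := P2.sim_equiv.refl (h v1)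
  exact ⟨subdivMap hh hu hv, isHom_subdivMap hh hpp hu hv, preservesParts_subdivMap hh hpp hu hv⟩
end

section
/- A binary CSP instance I is acyclic (its constraint graph contains no cycle) if and only if the pattern Pat_G(C3) does not occur as a topological minor in Pat(I), where C3 is the 3-cycle graph. -/
/-- The negative pattern associated with a graph `G`: points are incidences
`(e, v)` with `v ∈ e`, parts group points with the same vertex, and each edge
contributes one negative edge between its two incidence points. -/
def PatG {V : Type} (G : SimpleGraph V) : Pattern where
  X := Σ e : G.edgeSet, {v : V // v ∈ (e : Sym2 V)}
  sim := fun x y => x.2.1 = y.2.1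
  pos := fun _ _ => False
  neg := fun x y => x.1 = y.1 ∧ x.2.1 ≠ y.2.1
  sim_equiv := ⟨fun _ => rfl, Eq.symm, Eq.trans⟩
  pos_symm := fun _ _ h => h.elim
  neg_symm := fun _ _ h => ⟨h.1.symm, h.2.symm⟩
  sim_pos := fun _ _ _ hp => hp
  sim_neg := fun _ _ h hn => hn.2 h

/-- `G` is a star graph with central vertex `c`: connected, acyclic, `c` has
degree greater than 2 and every other vertex has degree at most 2. -/
def IsStarGraph {V : Type} (G : SimpleGraph V) (c : V) : Prop :=
  G.Connected ∧ G.IsAcyclic ∧ 2 < (G.neighborSet c).ncard ∧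
    ∀ v : V, v ≠ c → (G.neighborSet v).ncard ≤ 2

/-- `Q` is obtained from `PatG G` by merging zero or more points of the part
corresponding to the central vertex `c`. -/
def IsMergeOf (Q : Pattern) {V : Type} (G : SimpleGraph V) (c : V) : Prop :=
  ∃ q : (PatG G).X → Q.X, Function.Surjective q ∧
    (∀ x y, q x = q y → x = y ∨ (x.2.1 = c ∧ y.2.1 = c)) ∧
    (∀ a b, Q.sim a b ↔ ∃ x y, q x = a ∧ q y = b ∧ (PatG G).sim x y) ∧
    (∀ a b, ¬ Q.pos a b) ∧
    (∀ a b, Q.neg a b ↔ ∃ x y, q x = a ∧ q y = b ∧ (PatG G).neg x y)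

/-- A star pattern: obtained from `PatG G` for some star graph `G` by merging
zero or more points in the central part. -/
def IsStarPattern (Q : Pattern) : Prop :=
  ∃ (V : Type) (_ : Finite V) (G : SimpleGraph V) (c : V),
    IsStarGraph G c ∧ IsMergeOf Q G c

/-- The negative pattern obtained from `P` by removing all positive edges. -/
def negPart (P : Pattern) : Pattern :=
  { P with
    pos := fun _ _ => False
    pos_symm := fun _ _ h => h.elim
    sim_pos := fun _ _ _ hp => hp }

/-- `P` is star-like: removing its positive edges yields a pattern occurring as
a sub-pattern of some star pattern. -/
def IsStarLike (P : Pattern) : Prop :=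
  ∃ Q : Pattern, IsStarPattern Q ∧ SP (negPart P) Q

/-- A bundled graph. -/
structure BGraph where
  V : Type
  G : SimpleGraph V

/-- The subdivision of the edge `{u,v}` of a graph by a new vertex. -/
def gSubdivOne (A : BGraph) (u v : A.V) : BGraph where
  V := A.V ⊕ Unit
  G :=
    { Adj := fun a b => match a, b with
        | .inl x, .inl y => A.G.Adj x y ∧ ¬((x = u ∧ y = v) ∨ (x = v ∧ y = u))
        | .inl x, .inr _ => x = u ∨ x = v
        | .inr _, .inl x => x = u ∨ x = v
        | .inr _, .inr _ => False
      symm := by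
        refine ⟨?_⟩
        rintro (x | x) (y | y) h
        · exact ⟨A.G.adj_symm h.1, fun hc => h.2 (hc.elim (fun c => Or.inr ⟨c.2, c.1⟩)
            (fun c => Or.inl ⟨c.2, c.1⟩))⟩
        · exact h
        · exact h
        · exact h.elim
      loopless := by
        refine ⟨?_⟩
        rintro (x | x) h
        · exact A.G.irrefl h.1
        · exact h }

/-- One graph-subdivision step. -/
def GSubdivStep (A B : BGraph) : Prop :=
  ∃ u v : A.V, A.G.Adj u v ∧ B = gSubdivOne A u v

/-- `B` is obtained from `A` by a (possibly empty) sequence of edge subdivisions. -/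
def IsGraphSubdivision : BGraph → BGraph → Prop :=
  Relation.ReflTransGen GSubdivStep

/-- `A` is a topological minor of `B`: some subdivision of `A` is isomorphic to
a subgraph of `B`. -/
def IsTopMinorOf (A B : BGraph) : Prop :=
  ∃ A' : BGraph, IsGraphSubdivision A A' ∧
    ∃ f : A'.V → B.V, Function.Injective f ∧ ∀ x y, A'.G.Adj x y → B.G.Adj (f x) (f y)

/-- The constraint graph of a pattern: vertices are the parts, with an edge
between two parts whenever a negative edge joins them. -/
def CGraph (P : Pattern) : SimpleGraph (Quot P.sim) where
  Adj a b := a ≠ b ∧ ∃ x y : P.X, Quot.mk _ x = a ∧ Quot.mk _ y = b ∧ P.neg x y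
  symm := by
    refine ⟨?_⟩
    rintro a b ⟨hab, x, y, hx, hy, hneg⟩
    exact ⟨hab.symm, y, x, hy, hx, P.neg_symm hneg⟩
  loopless := ⟨fun a h => h.1 rfl⟩

/-- The constraint graph of a binary CSP instance: variables are vertices, with
an edge between `u` and `v` whenever the constraint `R u v` is non-trivial. -/
def cgraphI (I : CSPInstance) : SimpleGraph I.V where
  Adj u v := u ≠ v ∧ ∃ (a : I.D u) (b : I.D v), ¬ I.R u v a b
  symm := by
    refine ⟨?_⟩
    rintro u v ⟨huv, a, b, hab⟩
    exact ⟨huv.symm, b, a, fun hr => hab (I.symmR _ _ _ _ hr)⟩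
  loopless := ⟨fun u h => h.1 rfl⟩

/-! Subdividing the negative pattern of an `n`-cycle at two consecutive parts gives the pattern of
an `(n+1)`-cycle, and at two non-consecutive parts changes nothing, since no edge joins them.
So the subdivisions of `Pat_G(C3)` are patterns of cycles, of every length `n ≥ 3`. Such a
pattern occurs in `Pat(I)` iff the constraint graph of `I` has a cycle of length `n`: a
part-preserving map sends the parts to distinct variables, and each negative edge of the cycle
pattern to a forbidden pair of a non-trivial constraint. -/

namespace ZMod

def castSucc {n : ℕ} (i : ZMod n) : ZMod (n + 1) := (i.val : ZMod (n + 1))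

theorem two_ne_zero_of_three_le {n : ℕ} (hn : 3 ≤ n) : (2 : ZMod n) ≠ 0 := fun h2 => by
  have := (natCast_eq_zero_iff 2 n).1 (by exact_mod_cast h2)
  exact absurd (Nat.le_of_dvd two_pos this) (by omega)

theorem castSucc_zero {n : ℕ} : castSucc (0 : ZMod n) = 0 := by simp [castSucc]

theorem eq_neg_one_or_eq_castSucc {n : ℕ} (j : ZMod (n + 1)) :
    j = -1 ∨ ∃ i : ZMod n, j = castSucc i := by
  rcases (Nat.lt_succ_iff.mp j.val_lt).lt_or_eq with hj | hj
  · refine Or.inr ⟨j.val, ?_⟩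
    rw [castSucc, val_cast_of_lt hj, natCast_zmod_val]
  · exact Or.inl (val_injective _ (by rw [hj, val_neg_one]))

variable {n : ℕ} [NeZero n]

theorem val_castSucc (i : ZMod n) : (castSucc i).val = i.val :=
  val_cast_of_lt (i.val_lt.trans (Nat.lt_succ_self n))

theorem castSucc_injective : Function.Injective (castSucc : ZMod n → ZMod (n + 1)) :=
  fun i j h => val_injective n (by rw [← val_castSucc i, h, val_castSucc])

theorem castSucc_ne_neg_one (i : ZMod n) : castSucc i ≠ -1 := fun h => by
  have := congrArg val h
  rw [val_castSucc, val_neg_one] at this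
  exact (i.val_lt).ne this

theorem castSucc_add_one {i : ZMod n} (hi : i ≠ -1) : castSucc (i + 1) = castSucc i + 1 := by
  have hcast : i + 1 = ((i.val + 1 : ℕ) : ZMod n) := by push_cast; rw [natCast_zmod_val]
  have hlt : i.val + 1 < n := by
    refine lt_of_le_of_ne i.val_lt ?_
    intro heq
    rw [heq, natCast_self] at hcast
    exact hi (eq_neg_of_add_eq_zero_left hcast)
  rw [castSucc, castSucc, hcast, val_cast_of_lt hlt, Nat.cast_add, Nat.cast_one]

theorem castSucc_neg_one_add_one : castSucc (-1 : ZMod n) + 1 = -1 := by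
  obtain ⟨m, rfl⟩ : ∃ m, n = m + 1 := Nat.exists_eq_succ_of_ne_zero (NeZero.ne n)
  refine eq_neg_of_add_eq_zero_left ?_
  rw [castSucc, val_neg_one, add_assoc, one_add_one_eq_two]
  exact_mod_cast natCast_self (m + 2)

end ZMod

theorem SimpleGraph.not_isAcyclic_iff_exists_zmod_cycle {V : Type*} {G : SimpleGraph V} :
    ¬ G.IsAcyclic ↔
      ∃ n ≥ 3, ∃ F : ZMod n → V, Function.Injective F ∧ ∀ i, G.Adj (F i) (F (i + 1)) := by
  simp only [SimpleGraph.isAcyclic_iff_free_cycleGraph, not_forall, SimpleGraph.Free, not_not]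
  refine exists_congr fun n => ⟨fun ⟨hn, hc⟩ => ⟨hn, ?_⟩, fun ⟨hn, hF⟩ => ⟨hn, ?_⟩⟩
  · obtain ⟨m, rfl⟩ : ∃ m, n = m + 3 := ⟨n - 3, by omega⟩
    obtain ⟨c⟩ := hc
    exact ⟨c, c.injective, fun i => c.toHom.map_adj (Or.inr (add_sub_cancel_left i 1))⟩
  · obtain ⟨m, rfl⟩ : ∃ m, n = m + 3 := ⟨n - 3, by omega⟩
    obtain ⟨F, hinj, hadj⟩ := hF
    refine ⟨⟨⟨F, fun {i j} hij => ?_⟩, hinj⟩⟩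
    rcases hij with h | h
    · rw [← sub_add_cancel i j, h, add_comm]; exact (hadj j).symm
    · rw [← sub_add_cancel j i, h, add_comm]; exact hadj i

/-- `(i, b)` and `(j, c)` can be the two ends of a negative edge of the pattern of the `n`-cycle
whose parts are indexed by `ZMod n`; the flag `true` marks the end whose edge leads forward. -/
def CycleLink {n : ℕ} (i : ZMod n) (b : Bool) (j : ZMod n) (c : Bool) : Prop :=
  (b = true ∧ c = false ∧ j = i + 1) ∨ (b = false ∧ c = true ∧ i = j + 1)

namespace CycleLink

variable {n : ℕ} {i j : ZMod n} {b c : Bool}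

theorem symm (h : CycleLink i b j c) : CycleLink j c i b := by
  unfold CycleLink at *; tauto

theorem add_const (h : CycleLink i b j c) (k : ZMod n) : CycleLink (i + k) b (j + k) c := by
  rcases h with ⟨hb, hc, hij⟩ | ⟨hb, hc, hij⟩
  · exact Or.inl ⟨hb, hc, by rw [hij]; ring⟩
  · exact Or.inr ⟨hb, hc, by rw [hij]; ring⟩

theorem neg (h : CycleLink i b j c) : CycleLink (-i) (!b) (-j) (!c) := by
  rcases h with ⟨rfl, rfl, rfl⟩ | ⟨rfl, rfl, rfl⟩
  · exact Or.inr ⟨rfl, rfl, by ring⟩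
  · exact Or.inl ⟨rfl, rfl, by ring⟩

theorem dir_eq_of_eq_add_one (hn : 3 ≤ n) (h : CycleLink i b j c) (hij : j = i + 1) :
    b = true ∧ c = false := by
  rcases h with ⟨hb, hc, -⟩ | ⟨-, -, hji⟩
  · exact ⟨hb, hc⟩
  · exact absurd (by rw [hij] at hji; linear_combination -hji) (ZMod.two_ne_zero_of_three_le hn)

end CycleLink

structure IsCycleLabelling {n : ℕ} (P : Pattern) (idx : P.X → ZMod n) (dir : P.X → Bool) :
    Prop where
  sim_iff : ∀ x y, P.sim x y ↔ idx x = idx y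
  not_pos : ∀ x y, ¬ P.pos x y
  link_of_neg : ∀ x y, P.neg x y → CycleLink (idx x) (dir x) (idx y) (dir y)
  exists_neg : ∀ i, ∃ x y, idx x = i ∧ idx y = i + 1 ∧ P.neg x y

def IsCyclePattern (n : ℕ) (P : Pattern) : Prop :=
  ∃ (idx : P.X → ZMod n) (dir : P.X → Bool), IsCycleLabelling P idx dir

namespace IsCycleLabelling

variable {n : ℕ} {P : Pattern} {idx : P.X → ZMod n} {dir : P.X → Bool}

theorem add_const (h : IsCycleLabelling P idx dir) (k : ZMod n) :
    IsCycleLabelling P (fun x => idx x + k) dir where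
  sim_iff x y := (h.sim_iff x y).trans (add_left_inj k).symm
  not_pos := h.not_pos
  link_of_neg x y hxy := (h.link_of_neg x y hxy).add_const k
  exists_neg i := by
    obtain ⟨x, y, hx, hy, hxy⟩ := h.exists_neg (i - k)
    exact ⟨x, y, by rw [hx]; ring, by rw [hy]; ring, hxy⟩

theorem neg (h : IsCycleLabelling P idx dir) :
    IsCycleLabelling P (fun x => -idx x) (fun x => !dir x) where
  sim_iff x y := (h.sim_iff x y).trans neg_inj.symm
  not_pos := h.not_pos
  link_of_neg x y hxy := (h.link_of_neg x y hxy).neg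
  exists_neg i := by
    obtain ⟨x, y, hx, hy, hxy⟩ := h.exists_neg (-i - 1)
    exact ⟨y, x, by rw [hy]; ring, by rw [hx]; ring, P.neg_symm hxy⟩

theorem subdivOne_of_not_link (h : IsCycleLabelling P idx dir) {u v : P.X}
    (huv : idx v ≠ idx u + 1) (hvu : idx u ≠ idx v + 1) :
    IsCyclePattern n (SubdivOne P u v) := by
  have : IsEmpty (PosZ P u v) := ⟨fun z => h.not_pos _ _ z.2.2.2⟩
  have : IsEmpty (NegZ P u v) := ⟨fun ⟨z, _⟩ => by
    obtain ⟨hxu, hyv, hxy⟩ := z.2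
    rw [h.sim_iff] at hxu hyv
    rcases h.link_of_neg _ _ hxy with ⟨-, -, h'⟩ | ⟨-, -, h'⟩
    · exact huv (by rw [← hxu, ← hyv, h'])
    · exact hvu (by rw [← hxu, ← hyv, h'])⟩
  refine ⟨Sum.elim idx isEmptyElim, Sum.elim dir isEmptyElim, ?_, ?_, ?_, ?_⟩
  · rintro (x | w) (y | w')
    · exact h.sim_iff x y
    all_goals exact isEmptyElim ‹PosZ P u v ⊕ NegZ P u v›
  · rintro (x | w) (y | w') hxy
    · exact h.not_pos x y hxy.1
    all_goals exact isEmptyElim ‹PosZ P u v ⊕ NegZ P u v›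
  · rintro (x | w) (y | w') hxy
    · exact h.link_of_neg x y hxy.1
    all_goals exact isEmptyElim ‹PosZ P u v ⊕ NegZ P u v›
  · intro i
    obtain ⟨x, y, hx, hy, hxy⟩ := h.exists_neg i
    refine ⟨.inl x, .inl y, hx, hy, hxy, ?_⟩
    rw [h.sim_iff, h.sim_iff, h.sim_iff, h.sim_iff]
    rintro (⟨hxu, hyv⟩ | ⟨hxv, hyu⟩)
    · exact huv (by rw [← hxu, ← hyv, hx, hy])
    · exact hvu (by rw [← hxv, ← hyu, hx, hy])

theorem subdivOne_succ (hn : 3 ≤ n) (h : IsCycleLabelling P idx dir) {u v : P.X}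
    (hu : idx u = -1) (hv : idx v = 0) : IsCyclePattern (n + 1) (SubdivOne P u v) := by
  have : NeZero n := ⟨by omega⟩
  have hlink_uv : ∀ x y, P.neg x y → idx x = -1 → idx y = 0 → dir x = true ∧ dir y = false :=
    fun x y hxy hx hy => (h.link_of_neg x y hxy).dir_eq_of_eq_add_one hn (by rw [hx, hy]; ring)
  have hnew : ∀ x (w : NegZ P u v), (SubdivOne P u v).neg (.inl x) (.inr (.inr w)) →
      CycleLink (ZMod.castSucc (idx x)) (dir x) (-1) w.2 := by
    rintro x ⟨⟨⟨x₁, x₂⟩, hx₁, hx₂, hx₁₂⟩, b⟩ hxw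
    rw [h.sim_iff, hu] at hx₁
    rw [h.sim_iff, hv] at hx₂
    obtain ⟨hd₁, hd₂⟩ := hlink_uv x₁ x₂ hx₁₂ hx₁ hx₂
    rcases hxw with ⟨rfl, rfl⟩ | ⟨rfl, rfl⟩
    · exact Or.inl ⟨hd₁, rfl, by rw [hx₁, ZMod.castSucc_neg_one_add_one]⟩
    · exact Or.inr ⟨hd₂, rfl, by rw [hx₂, ZMod.castSucc_zero, neg_add_cancel]⟩
  have hshift : ∀ x y, P.neg x y → ¬ (P.sim x u ∧ P.sim y v) → idx y = idx x + 1 →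
      ZMod.castSucc (idx y) = ZMod.castSucc (idx x) + 1 := by
    intro x y hxy hnot hi
    rw [hi, ZMod.castSucc_add_one]
    intro hx
    exact hnot ⟨by rw [h.sim_iff, hx, hu], by rw [h.sim_iff, hi, hx, hv, neg_add_cancel]⟩
  -- The new part gets index `-1 = n`, between `castSucc (-1) = n - 1` and `castSucc 0 = 0`.
  refine ⟨Sum.elim (fun x => ZMod.castSucc (idx x)) (fun _ => -1),
    Sum.elim dir (Sum.elim (fun _ => true) Prod.snd), ⟨?_, ?_, ?_, ?_⟩⟩
  · rintro (x | w) (y | w')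
    · exact (h.sim_iff x y).trans ZMod.castSucc_injective.eq_iff.symm
    · exact iff_of_false id (ZMod.castSucc_ne_neg_one _)
    · exact iff_of_false id (ZMod.castSucc_ne_neg_one _).symm
    · exact iff_of_true trivial rfl
  · rintro (x | z | z) (y | z' | z') hxy
    all_goals first
      | exact hxy
      | exact h.not_pos _ _ hxy.1
      | exact h.not_pos _ _ z.2.2.2
      | exact h.not_pos _ _ z'.2.2.2
  · rintro (x | z | w) (y | z' | w') hxy
    all_goals try exact hxy.elim
    · obtain ⟨hxy, hnot⟩ := hxy
      rcases h.link_of_neg x y hxy with ⟨hdx, hdy, hi⟩ | ⟨hdx, hdy, hi⟩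
      · exact Or.inl ⟨hdx, hdy, hshift x y hxy (fun hc => hnot (Or.inl hc)) hi⟩
      · exact Or.inr ⟨hdx, hdy, hshift y x (P.neg_symm hxy) (fun hc => hnot (Or.inr hc.symm)) hi⟩
    · exact hnew x w' hxy
    · exact (hnew y w ((SubdivOne P u v).neg_symm hxy)).symm
  · intro j
    obtain ⟨x₀, y₀, hx₀, hy₀, hxy₀⟩ := h.exists_neg (-1)
    rw [neg_add_cancel] at hy₀
    let z : {p : P.X × P.X // P.sim p.1 u ∧ P.sim p.2 v ∧ P.neg p.1 p.2} :=
      ⟨(x₀, y₀), (h.sim_iff _ _).2 (hx₀.trans hu.symm), (h.sim_iff _ _).2 (hy₀.trans hv.symm),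
        hxy₀⟩
    rcases ZMod.eq_neg_one_or_eq_castSucc j with rfl | ⟨i, rfl⟩
    · refine ⟨.inr (.inr (z, true)), .inl y₀, rfl, ?_, Or.inr ⟨rfl, rfl⟩⟩
      simp only [Sum.elim_inl, hy₀, ZMod.castSucc_zero, neg_add_cancel]
    by_cases hi : i = -1
    · subst hi
      exact ⟨.inl x₀, .inr (.inr (z, false)), by simp only [Sum.elim_inl, hx₀],
        ZMod.castSucc_neg_one_add_one.symm, Or.inl ⟨rfl, rfl⟩⟩
    obtain ⟨x, y, hx, hy, hxy⟩ := h.exists_neg i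
    refine ⟨.inl x, .inl y, by simp only [Sum.elim_inl, hx], ?_, hxy, ?_⟩
    · simp only [Sum.elim_inl, hy, ZMod.castSucc_add_one hi]
    rw [h.sim_iff, h.sim_iff, h.sim_iff, h.sim_iff, hx, hy, hu, hv]
    rintro (⟨hi', -⟩ | ⟨hi0, hi1⟩)
    · exact hi hi'
    · exact ZMod.two_ne_zero_of_three_le hn (by rw [hi0] at hi1; linear_combination hi1)

end IsCycleLabelling

instance : Fintype (PatG (⊤ : SimpleGraph (Fin 3))).X := by unfold PatG; infer_instance

theorem isCyclePattern_patG_C3 : IsCyclePattern 3 (PatG (⊤ : SimpleGraph (Fin 3))) := by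
  refine ⟨fun x => ((x.2.1 : ℕ) : ZMod 3), fun x => decide (x.1.1 = s(x.2.1, x.2.1 + 1)),
    ⟨?_, fun _ _ h => h, ?_, ?_⟩⟩
  · show ∀ x y : (PatG (⊤ : SimpleGraph (Fin 3))).X, x.2.1 = y.2.1 ↔ _
    decide
  · show ∀ x y : (PatG (⊤ : SimpleGraph (Fin 3))).X, x.1 = y.1 ∧ x.2.1 ≠ y.2.1 → _
    unfold CycleLink; decide
  · show ∀ i, ∃ x y : (PatG (⊤ : SimpleGraph (Fin 3))).X, _ ∧ _ ∧ x.1 = y.1 ∧ x.2.1 ≠ y.2.1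
    decide

namespace IsCyclePattern

variable {n : ℕ} {P : Pattern}

theorem subdivStep (hn : 3 ≤ n) (h : IsCyclePattern n P) {Q : Pattern} (hPQ : SubdivStep P Q) :
    IsCyclePattern n Q ∨ IsCyclePattern (n + 1) Q := by
  obtain ⟨idx, dir, h⟩ := h
  obtain ⟨u, v, -, rfl⟩ := hPQ
  -- Rotate, reflecting if needed, so that `u` gets index `-1` and `v` index `0`.
  by_cases huv : idx v = idx u + 1
  · exact Or.inr ((h.add_const (-idx u - 1)).subdivOne_succ hn (by ring)
      (by simp only [huv]; ring))
  by_cases hvu : idx u = idx v + 1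
  · exact Or.inr ((h.neg.add_const (idx u - 1)).subdivOne_succ hn (by ring)
      (by simp only [hvu]; ring))
  exact Or.inl (h.subdivOne_of_not_link huv hvu)

end IsCyclePattern

theorem exists_isCyclePattern_of_isSubdivision_patG_C3 {P : Pattern}
    (h : IsSubdivision (PatG (⊤ : SimpleGraph (Fin 3))) P) : ∃ n ≥ 3, IsCyclePattern n P := by
  induction h with
  | refl => exact ⟨3, le_rfl, isCyclePattern_patG_C3⟩
  | tail _ hstep ih =>
    obtain ⟨n, hn, h⟩ := ih
    rcases h.subdivStep hn hstep with h | h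
    · exact ⟨n, hn, h⟩
    · exact ⟨n + 1, by omega, h⟩

theorem exists_isSubdivision_patG_C3_isCyclePattern {n : ℕ} (hn : 3 ≤ n) :
    ∃ P, IsSubdivision (PatG (⊤ : SimpleGraph (Fin 3))) P ∧ IsCyclePattern n P := by
  induction n, hn using Nat.le_induction with
  | base => exact ⟨_, .refl, isCyclePattern_patG_C3⟩
  | succ n hn ih =>
    obtain ⟨P, hsub, idx, dir, h⟩ := ih
    obtain ⟨x, y, hx, hy, hxy⟩ := h.exists_neg (-1)
    rw [neg_add_cancel] at hy
    refine ⟨_, hsub.tail ⟨x, y, fun hs => ?_, rfl⟩, h.subdivOne_succ hn hx hy⟩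
    exact P.sim_neg hs hxy

theorem cgraphI_adj_of_neg {I : CSPInstance} {p q : (Pat I).X} (h : (Pat I).neg p q) :
    (cgraphI I).Adj p.1 q.1 :=
  ⟨h.1, p.2, q.2, h.2⟩

namespace IsCyclePattern

variable {n : ℕ} {P : Pattern} {I : CSPInstance}

theorem sp_pat_of_cycle (h : IsCyclePattern n P) {F : ZMod n → I.V} (hF : Function.Injective F)
    (hadj : ∀ i, (cgraphI I).Adj (F i) (F (i + 1))) : SP P (Pat I) := by
  obtain ⟨idx, dir, h⟩ := h
  have hwit : ∀ i, ∃ p q : (Pat I).X, p.1 = F i ∧ q.1 = F (i + 1) ∧ (Pat I).neg p q := by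
    intro i
    obtain ⟨hne, a, b, hab⟩ := hadj i
    exact ⟨⟨F i, a⟩, ⟨F (i + 1), b⟩, rfl, rfl, hne, hab⟩
  choose p q hp hq hpq using hwit
  let g : P.X → (Pat I).X := fun x => if dir x then p (idx x) else q (idx x - 1)
  have hg : ∀ x, (g x).1 = F (idx x) := by
    intro x
    by_cases hd : dir x <;> simp [g, hd, hp, hq]
  refine ⟨g, ⟨fun x y hxy => ?_, fun x y hxy => (h.not_pos x y hxy).elim, fun x y hxy => ?_⟩,
    fun x y hxy => ?_⟩
  · show (g x).1 = (g y).1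
    rw [hg, hg, (h.sim_iff x y).1 hxy]
  · rcases h.link_of_neg x y hxy with ⟨hdx, hdy, hi⟩ | ⟨hdx, hdy, hi⟩
    · simpa [g, hdx, hdy, hi] using hpq (idx x)
    · simpa [g, hdx, hdy, hi] using (Pat I).neg_symm (hpq (idx y))
  · show (g x).1 ≠ (g y).1
    rw [hg, hg]
    exact hF.ne (mt (h.sim_iff x y).2 hxy)

theorem exists_cycle_of_sp (h : IsCyclePattern n P) (hsp : SP P (Pat I)) :
    ∃ F : ZMod n → I.V, Function.Injective F ∧ ∀ i, (cgraphI I).Adj (F i) (F (i + 1)) := by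
  obtain ⟨idx, dir, h⟩ := h
  obtain ⟨g, ⟨hsim, -, hneg⟩, hparts⟩ := hsp
  choose x y hx hy hxy using h.exists_neg
  have hg : ∀ z, (g z).1 = (g (x (idx z))).1 :=
    fun z => hsim _ _ ((h.sim_iff _ _).2 (hx _).symm)
  refine ⟨fun i => (g (x i)).1, fun i j hij => ?_, fun i => ?_⟩
  · by_contra hne
    exact hparts (x i) (x j) (by rwa [h.sim_iff, hx, hx]) hij
  · have := cgraphI_adj_of_neg (hneg _ _ (hxy i))
    rwa [hg (y i), hy, hg (x i), hx] at this

end IsCyclePattern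

/-- A binary CSP instance is acyclic iff the pattern of the
3-cycle `C3` does not occur as a topological minor in its pattern. -/
theorem acyclic_iff_not_TM_PatG_C3 (I : CSPInstance) :
    (cgraphI I).IsAcyclic ↔ ¬ TM (PatG (⊤ : SimpleGraph (Fin 3))) (Pat I) := by
  rw [← not_iff_not, not_not, SimpleGraph.not_isAcyclic_iff_exists_zmod_cycle]
  constructor
  · rintro ⟨n, hn, F, hF, hadj⟩
    obtain ⟨P, hsub, hP⟩ := exists_isSubdivision_patG_C3_isCyclePattern hn
    exact ⟨P, hsub, hP.sp_pat_of_cycle hF hadj⟩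
  · rintro ⟨P, hsub, hsp⟩
    obtain ⟨n, hn, hP⟩ := exists_isCyclePattern_of_isSubdivision_patG_C3 hsub
    exact ⟨n, hn, hP.exists_cycle_of_sp hsp⟩
end

section
/- Let f : D^k → D be a k-ary operation on a finite domain D and let I be a binary CSP instance over D. Then every constraint relation of I admits f as a polymorphism if and only if the augmented pattern P_R (two parts {p_1,...,p_{k+1}} and {q_1,...,q_{k+1}}, positive edges (p_i,q_i) for i ≤ k, a negative edge (p_{k+1},q_{k+1}), and R = {(p_1,...,p_{k+1}), (q_1,...,q_{k+1})}) does not occur as a sub-pattern in the augmented pattern (Pat(I), Rel_f(I)). -/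
/-- A binary CSP instance over a fixed domain `D`. -/
structure FDCSP (D : Type) where
  V : Type
  finV : Finite V
  finD : Finite D
  R : V → V → D → D → Prop
  symmR : ∀ u v a b, R u v a b → R v u b a

/-- The pattern of a fixed-domain instance. -/
def PatF {D : Type} (I : FDCSP D) : Pattern where
  X := I.V × D
  sim := fun x y => x.1 = y.1
  pos := fun x y => x.1 ≠ y.1 ∧ I.R x.1 y.1 x.2 y.2
  neg := fun x y => x.1 ≠ y.1 ∧ ¬ I.R x.1 y.1 x.2 y.2
  sim_equiv := ⟨fun _ => rfl, Eq.symm, Eq.trans⟩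
  pos_symm := fun _ _ h => ⟨Ne.symm h.1, I.symmR _ _ _ _ h.2⟩
  neg_symm := fun _ _ h => ⟨Ne.symm h.1, fun hr => h.2 (I.symmR _ _ _ _ hr)⟩
  sim_pos := fun _ _ h hp => hp.1 h
  sim_neg := fun _ _ h hn => hn.1 h

/-- An augmented pattern: a pattern together with an `m`-ary relation on its
points. -/
structure APattern (m : ℕ) where
  P : Pattern
  R : Set (Fin m → P.X)

/-- Sub-pattern occurrence of augmented patterns: a part-preserving
homomorphism mapping tuples of the relation into tuples of the target
relation. -/
def ASP {m : ℕ} (A B : APattern m) : Prop :=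
  ∃ h : A.P.X → B.P.X, IsHom A.P B.P h ∧ PreservesParts A.P B.P h ∧
    ∀ t ∈ A.R, h ∘ t ∈ B.R

/-- The augmented pattern `P_R` of Theorem `languageasForbSP`: two parts
`p_0,…,p_k` and `q_0,…,q_k`, positive edges `(p_i, q_i)` for `i < k`, a
negative edge `(p_k, q_k)`, with `R` consisting of the two tuples
`(p_0,…,p_k)` and `(q_0,…,q_k)`. -/
def polyPattern (k : ℕ) : APattern (k + 1) where
  P := { X := Bool × Fin (k + 1)
         sim := fun x y => x.1 = y.1
         pos := fun x y => x.1 ≠ y.1 ∧ x.2 = y.2 ∧ x.2 ≠ Fin.last k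
         neg := fun x y => x.1 ≠ y.1 ∧ x.2 = y.2 ∧ x.2 = Fin.last k
         sim_equiv := ⟨fun _ => rfl, Eq.symm, Eq.trans⟩
         pos_symm := fun _ _ h => ⟨Ne.symm h.1, h.2.1.symm, h.2.1 ▸ h.2.2⟩
         neg_symm := fun _ _ h => ⟨Ne.symm h.1, h.2.1.symm, h.2.1 ▸ h.2.2⟩
         sim_pos := fun _ _ h hp => hp.1 h
         sim_neg := fun _ _ h hn => hn.1 h }
  R := {fun i => (false, i), fun i => (true, i)}

/-- The relation `Rel_f(I)` on the points of `PatF I`: tuples of values of a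
single variable whose last coordinate is the image under `f` of the first `k`
coordinates. -/
def RelF {D : Type} (I : FDCSP D) (k : ℕ) (f : (Fin k → D) → D) :
    Set (Fin (k + 1) → I.V × D) :=
  { t | (∃ v : I.V, ∀ i, (t i).1 = v) ∧
        (t (Fin.last k)).2 = f (fun i => (t i.castSucc).2) }

/-!
An occurrence of `P_R` is determined by the images `s`, `t` of its two `R`-tuples. In
`(Pat(I), Rel_f(I))` these are `(u, a, f a)` and `(v, b, f b)` with `u ≠ v`, and the edge
conditions say exactly that `a` and `b` are coordinatewise compatible under `R_uv` while
`f a` and `f b` are not, i.e. that `(a, b)` witnesses the failure of `f` to be a polymorphism.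
-/

/-- The part-preservation condition comes for free: the negative edge `(p_k, q_k)` already
separates the two parts. -/
theorem asp_polyPattern_iff {k : ℕ} (B : APattern (k + 1)) :
    ASP (polyPattern k) B ↔
      ∃ s t : Fin (k + 1) → B.P.X, s ∈ B.R ∧ t ∈ B.R ∧
        (∀ i j, B.P.sim (s i) (s j)) ∧ (∀ i j, B.P.sim (t i) (t j)) ∧
        (∀ i : Fin k, B.P.pos (s i.castSucc) (t i.castSucc)) ∧
        B.P.neg (s (Fin.last k)) (t (Fin.last k)) := by
  constructor
  · rintro ⟨h, ⟨hsim, hpos, hneg⟩, -, hR⟩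
    refine ⟨fun i => h (false, i), fun i => h (true, i), hR _ (Or.inl rfl), hR _ (Or.inr rfl),
      fun i j => hsim _ _ rfl, fun i j => hsim _ _ rfl, fun i => ?_, ?_⟩
    · exact hpos _ _ ⟨Bool.false_ne_true, rfl, (Fin.castSucc_lt_last i).ne⟩
    · exact hneg _ _ ⟨Bool.false_ne_true, rfl, rfl⟩
  · rintro ⟨s, t, hs, ht, hss, htt, hpos, hneg⟩
    have hst : ∀ i j, ¬ B.P.sim (s i) (t j) := fun i j hij =>
      B.P.sim_neg (B.P.sim_equiv.trans (B.P.sim_equiv.trans (hss _ i) hij) (htt j _)) hneg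
    refine ⟨fun x => cond x.1 (t x.2) (s x.2), ⟨?_, ?_, ?_⟩, ?_, ?_⟩
    · rintro ⟨b, i⟩ ⟨_, j⟩ rfl
      cases b
      exacts [hss i j, htt i j]
    · rintro ⟨b, i⟩ ⟨b', _⟩ ⟨hb, rfl, hi⟩
      obtain ⟨m, rfl⟩ := Fin.exists_castSucc_eq.mpr hi
      obtain rfl : b = !b' := Bool.eq_not.mpr hb
      cases b'
      exacts [B.P.pos_symm (hpos m), hpos m]
    · rintro ⟨b, i⟩ ⟨b', _⟩ ⟨hb, rfl, rfl⟩
      obtain rfl : b = !b' := Bool.eq_not.mpr hb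
      cases b'
      exacts [B.P.neg_symm hneg, hneg]
    · rintro ⟨b, i⟩ ⟨b', j⟩ hb
      obtain rfl : b = !b' := Bool.eq_not.mpr hb
      cases b'
      exacts [fun h => hst j i (B.P.sim_equiv.symm h), hst i j]
    · rintro _ (rfl | rfl)
      exacts [hs, ht]

theorem mem_relF_iff {D : Type} (I : FDCSP D) (k : ℕ) (f : (Fin k → D) → D)
    (t : Fin (k + 1) → I.V × D) :
    t ∈ RelF I k f ↔ ∃ v a, t = fun i => (v, Fin.snoc a (f a) i) := by
  constructor
  · rintro ⟨⟨v, hv⟩, hlast⟩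
    refine ⟨v, fun i => (t i.castSucc).2, funext fun i => Prod.ext (hv i) ?_⟩
    induction i using Fin.lastCases with
    | last => simpa using hlast
    | cast i => simp
  · rintro ⟨v, a, rfl⟩
    exact ⟨⟨v, fun _ => rfl⟩, by simp⟩

theorem asp_polyPattern_relF_iff {D : Type} (k : ℕ) (f : (Fin k → D) → D) (I : FDCSP D) :
    ASP (polyPattern k) ⟨PatF I, RelF I k f⟩ ↔
      ∃ u v : I.V, u ≠ v ∧ ∃ as bs : Fin k → D,
        (∀ i, I.R u v (as i) (bs i)) ∧ ¬ I.R u v (f as) (f bs) := by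
  rw [asp_polyPattern_iff]
  constructor
  · rintro ⟨s, t, hs, ht, -, -, hpos, hneg⟩
    obtain ⟨u, as, rfl⟩ := (mem_relF_iff I k f s).mp hs
    obtain ⟨v, bs, rfl⟩ := (mem_relF_iff I k f t).mp ht
    refine ⟨u, v, hneg.1, as, bs, fun i => ?_, ?_⟩
    · simpa using (hpos i).2
    · simpa using hneg.2
  · rintro ⟨u, v, huv, as, bs, hR, hnR⟩
    refine ⟨_, _, (mem_relF_iff I k f _).mpr ⟨u, as, rfl⟩,
      (mem_relF_iff I k f _).mpr ⟨v, bs, rfl⟩, fun _ _ => rfl, fun _ _ => rfl, fun i => ⟨huv, ?_⟩, ⟨huv, ?_⟩⟩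
    · simpa using hR i
    · simpa using hnR

/-- `f` is a polymorphism of every constraint relation of `I` iff
the augmented pattern `P_R` does not occur as a sub-pattern in the augmented
pattern `(Pat(I), Rel_f(I))`. -/
theorem polymorphism_iff_not_ASP {D : Type} (k : ℕ) (f : (Fin k → D) → D)
    (I : FDCSP D) :
    (∀ u v : I.V, u ≠ v → ∀ as bs : Fin k → D,
        (∀ i, I.R u v (as i) (bs i)) → I.R u v (f as) (f bs)) ↔
      ¬ ASP (polyPattern k) ⟨PatF I, RelF I k f⟩ := by
  rw [asp_polyPattern_relF_iff]
  simp only [not_exists, not_and, not_not]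
end
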